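/- (Theorem 3.3, timelike principal normal case) A unit speed spacelike curve x : ℝ → E₁⁴ with Frenet frame {T, N, B₁, B₂}, nowhere-vanishing curvatures k₁, k₂, k₃ and signs ε₁ = −1, ε₂ ∈ {−1,1} is a B₂-slant helix if and only if there exist constants C, D ∈ ℝ such that k₃(s)/k₂(s) = C cosh(∫₀ˢ k₁(t) dt) + D sinh(∫₀ˢ k₁(t) dt) for all s. -/

import Mathlib

/-- The Minkowski bilinear form on `ℝ⁴`: `⟪v,w⟫ = -v₀w₀ + v₁w₁ + v₂w₂ + v₃w₃`. -/
noncomputable def mink (v w : Fin 4 → ℝ) : ℝ :=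
  -(v 0 * w 0) + v 1 * w 1 + v 2 * w 2 + v 3 * w 3

/-- A unit speed spacelike curve in Minkowski 4-space `E₁⁴` together with a Frenet
frame `{T, N, B₁, B₂}`, nowhere-vanishing curvatures `k₁, k₂, k₃` and signs `ε₁, ε₂`. -/
structure SpacelikeFrenetCurve where
  x : ℝ → Fin 4 → ℝ
  T : ℝ → Fin 4 → ℝ
  N : ℝ → Fin 4 → ℝ
  B₁ : ℝ → Fin 4 → ℝ
  B₂ : ℝ → Fin 4 → ℝ
  k₁ : ℝ → ℝ
  k₂ : ℝ → ℝ
  k₃ : ℝ → ℝ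
  ε₁ : ℝ
  ε₂ : ℝ
  smooth_x : ContDiff ℝ (⊤ : ℕ∞) x
  smooth_T : ContDiff ℝ (⊤ : ℕ∞) T
  smooth_N : ContDiff ℝ (⊤ : ℕ∞) N
  smooth_B₁ : ContDiff ℝ (⊤ : ℕ∞) B₁
  smooth_B₂ : ContDiff ℝ (⊤ : ℕ∞) B₂
  smooth_k₁ : ContDiff ℝ (⊤ : ℕ∞) k₁
  smooth_k₂ : ContDiff ℝ (⊤ : ℕ∞) k₂
  smooth_k₃ : ContDiff ℝ (⊤ : ℕ∞) k₃
  k₁_ne : ∀ s, k₁ s ≠ 0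
  k₂_ne : ∀ s, k₂ s ≠ 0
  k₃_ne : ∀ s, k₃ s ≠ 0
  ε₁_sign : ε₁ = 1 ∨ ε₁ = -1
  ε₂_sign : ε₂ = 1 ∨ ε₂ = -1
  tangent : ∀ s, deriv x s = T s
  TT : ∀ s, mink (T s) (T s) = 1
  NN : ∀ s, mink (N s) (N s) = ε₁
  B₁B₁ : ∀ s, mink (B₁ s) (B₁ s) = -(ε₁ * ε₂)
  B₂B₂ : ∀ s, mink (B₂ s) (B₂ s) = ε₂
  TN : ∀ s, mink (T s) (N s) = 0
  TB₁ : ∀ s, mink (T s) (B₁ s) = 0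
  TB₂ : ∀ s, mink (T s) (B₂ s) = 0
  NB₁ : ∀ s, mink (N s) (B₁ s) = 0
  NB₂ : ∀ s, mink (N s) (B₂ s) = 0
  B₁B₂ : ∀ s, mink (B₁ s) (B₂ s) = 0
  frenet_T : ∀ s, deriv T s = k₁ s • N s
  frenet_N : ∀ s, deriv N s = (-(ε₁ * k₁ s)) • T s + k₂ s • B₁ s
  frenet_B₁ : ∀ s, deriv B₁ s = (ε₂ * k₂ s) • N s + k₃ s • B₂ s
  frenet_B₂ : ∀ s, deriv B₂ s = (ε₁ * k₃ s) • B₁ s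

/-- `x` is a `B₂`-slant helix: a nonzero constant vector `U` makes a constant
"angle" with the second binormal, i.e. `s ↦ ⟪B₂ s, U⟫` is constant. -/
def IsB₂SlantHelix (c : SpacelikeFrenetCurve) : Prop :=
  ∃ U : Fin 4 → ℝ, U ≠ 0 ∧ ∃ C : ℝ, ∀ s : ℝ, mink (c.B₂ s) U = C

/- ### Auxiliary lemmas -/

lemma mink_comm (v w : Fin 4 → ℝ) : mink v w = mink w v := by
  simp only [mink]; ring

lemma mink_smul (r : ℝ) (v w : Fin 4 → ℝ) : mink (r • v) w = r * mink v w := by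
  simp only [mink, Pi.smul_apply, smul_eq_mul]; ring

lemma mink_add (v w u : Fin 4 → ℝ) : mink (v + w) u = mink v u + mink w u := by
  simp only [mink, Pi.add_apply]; ring

lemma hasDerivAt_mink {F : ℝ → Fin 4 → ℝ} {V : Fin 4 → ℝ} (U : Fin 4 → ℝ) {s : ℝ}
    (hF : HasDerivAt F V s) :
    HasDerivAt (fun t => mink (F t) U) (mink V U) s := by
  have h := hasDerivAt_pi.1 hF
  simpa only [mink, Pi.add_def, Pi.neg_def] using
    ((((h 0).mul_const (U 0)).neg.add ((h 1).mul_const (U 1))).add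
      ((h 2).mul_const (U 2))).add ((h 3).mul_const (U 3))

open Matrix in
lemma gram_entry (f : Fin 4 → Fin 4 → ℝ) (i j : Fin 4) :
    (Matrix.of f * Matrix.diagonal ![(-1:ℝ),1,1,1] * (Matrix.of f)ᵀ) i j
      = mink (f i) (f j) := by
  rw [Matrix.mul_apply]
  simp only [Matrix.mul_diagonal, Matrix.transpose_apply, Matrix.of_apply, Fin.sum_univ_four,
    mink, Matrix.cons_val_zero, Matrix.cons_val_one, Matrix.head_cons, Matrix.cons_val_two,
    Matrix.tail_cons, Matrix.cons_val_three]
  ring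

lemma mulVec_entry (f : Fin 4 → Fin 4 → ℝ) (U : Fin 4 → ℝ) (i : Fin 4) :
    (Matrix.of f).mulVec (fun k => ![(-1:ℝ),1,1,1] k * U k) i = mink (f i) U := by
  simp only [Matrix.mulVec, dotProduct, Fin.sum_univ_four, Matrix.of_apply,
    mink, Matrix.cons_val_zero, Matrix.cons_val_one, Matrix.head_cons, Matrix.cons_val_two,
    Matrix.tail_cons, Matrix.cons_val_three]
  ring

open Matrix in
/-- Nondegeneracy: a vector `mink`-orthogonal to a pseudo-orthonormal frame is zero. -/
lemma mink_nondeg (T N B₁ B₂ U : Fin 4 → ℝ) (ε₁ ε₂ : ℝ)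
    (hε₁ : ε₁ = 1 ∨ ε₁ = -1) (hε₂ : ε₂ = 1 ∨ ε₂ = -1)
    (tTT : mink T T = 1) (tNN : mink N N = ε₁) (tB₁B₁ : mink B₁ B₁ = -(ε₁ * ε₂))
    (tB₂B₂ : mink B₂ B₂ = ε₂) (tTN : mink T N = 0) (tTB₁ : mink T B₁ = 0)
    (tTB₂ : mink T B₂ = 0) (tNB₁ : mink N B₁ = 0) (tNB₂ : mink N B₂ = 0)
    (tB₁B₂ : mink B₁ B₂ = 0)
    (h1 : mink T U = 0) (h2 : mink N U = 0) (h3 : mink B₁ U = 0) (h4 : mink B₂ U = 0) :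
    U = 0 := by
  classical
  set A : Matrix (Fin 4) (Fin 4) ℝ := Matrix.of ![T, N, B₁, B₂] with hA
  have hgram : A * Matrix.diagonal ![(-1:ℝ),1,1,1] * Aᵀ
      = Matrix.diagonal ![1, ε₁, -(ε₁ * ε₂), ε₂] := by
    ext i j
    rw [hA, gram_entry]
    have hNT := mink_comm T N ▸ tTN
    have hB₁T := mink_comm T B₁ ▸ tTB₁
    have hB₂T := mink_comm T B₂ ▸ tTB₂
    have hB₁N := mink_comm N B₁ ▸ tNB₁
    have hB₂N := mink_comm N B₂ ▸ tNB₂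
    have hB₂B₁ := mink_comm B₁ B₂ ▸ tB₁B₂
    fin_cases i <;> fin_cases j <;>
      simp [Matrix.diagonal, tTT, tNN, tB₁B₁, tB₂B₂, tTN, tTB₁, tTB₂, tNB₁, tNB₂, tB₁B₂,
        hNT, hB₁T, hB₂T, hB₁N, hB₂N, hB₂B₁]
  have hdet : A.det * A.det = 1 := by
    have hd := congrArg Matrix.det hgram
    rw [Matrix.det_mul, Matrix.det_mul, Matrix.det_transpose] at hd
    have e1 : (Matrix.diagonal ![(-1:ℝ),1,1,1]).det = -1 := by
      simp [Matrix.det_diagonal, Fin.prod_univ_four]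
    have e2 : (Matrix.diagonal ![(1:ℝ), ε₁, -(ε₁ * ε₂), ε₂]).det = -1 := by
      rcases hε₁ with h | h <;> rcases hε₂ with h' | h' <;>
        simp [Matrix.det_diagonal, Fin.prod_univ_four, h, h']
    rw [e1, e2] at hd
    nlinarith [hd]
  have hu : IsUnit A.det := by
    refine isUnit_iff_ne_zero.2 fun h0 => ?_
    rw [h0] at hdet; norm_num at hdet
  have hAw : A.mulVec (fun k => ![(-1:ℝ),1,1,1] k * U k) = 0 := by
    funext i
    rw [hA, mulVec_entry]
    fin_cases i <;> simp [h1, h2, h3, h4]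
  have hw0 : (fun k => ![(-1:ℝ),1,1,1] k * U k) = (0 : Fin 4 → ℝ) := by
    have h1' := congrArg (fun v => A⁻¹.mulVec v) hAw
    simpa [Matrix.mulVec_mulVec, Matrix.nonsing_inv_mul A hu, Matrix.one_mulVec] using h1'
  have w0 := congrFun hw0 0
  have w1 := congrFun hw0 1
  have w2 := congrFun hw0 2
  have w3 := congrFun hw0 3
  simp at w0 w1 w2 w3
  funext i
  fin_cases i <;> simp [w0, w1, w2, w3]

/-- Theorem 3.3 (timelike principal normal, `ε₁ = −1`): `x` is a `B₂`-slant helix iff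
`k₃/k₂ = C cosh(∫₀ˢ k₁) + D sinh(∫₀ˢ k₁)` for some constants `C, D`. -/
theorem stmt16 (c : SpacelikeFrenetCurve) (hε : c.ε₁ = -1) :
    IsB₂SlantHelix c ↔
    ∃ C D : ℝ, ∀ s : ℝ, c.k₃ s / c.k₂ s =
      C * Real.cosh (∫ t in (0:ℝ)..s, c.k₁ t) +
      D * Real.sinh (∫ t in (0:ℝ)..s, c.k₁ t) := by
  have hε₂ne : c.ε₂ ≠ 0 := by rcases c.ε₂_sign with h | h <;> rw [h] <;> norm_num
  set θ : ℝ → ℝ := fun u => ∫ t in (0:ℝ)..u, c.k₁ t with hθdef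
  have hθ : ∀ s : ℝ, HasDerivAt θ (c.k₁ s) s := fun s =>
    (c.smooth_k₁.continuous.integral_hasStrictDerivAt 0 s).hasDerivAt
  have hθ0 : θ 0 = 0 := by rw [hθdef]; exact intervalIntegral.integral_same
  have hT : ∀ s, HasDerivAt c.T (c.k₁ s • c.N s) s := fun s => by
    have h := (c.smooth_T.differentiable (by simp) s).hasDerivAt
    rwa [c.frenet_T s] at h
  have hN : ∀ s, HasDerivAt c.N ((-(c.ε₁ * c.k₁ s)) • c.T s + c.k₂ s • c.B₁ s) s := fun s => by
    have h := (c.smooth_N.differentiable (by simp) s).hasDerivAt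
    rwa [c.frenet_N s] at h
  have hB₁ : ∀ s, HasDerivAt c.B₁ ((c.ε₂ * c.k₂ s) • c.N s + c.k₃ s • c.B₂ s) s := fun s => by
    have h := (c.smooth_B₁.differentiable (by simp) s).hasDerivAt
    rwa [c.frenet_B₁ s] at h
  have hB₂ : ∀ s, HasDerivAt c.B₂ ((c.ε₁ * c.k₃ s) • c.B₁ s) s := fun s => by
    have h := (c.smooth_B₂.differentiable (by simp) s).hasDerivAt
    rwa [c.frenet_B₂ s] at h
  constructor
  · rintro ⟨U, hU, C0, hC⟩
    have hc1 : ∀ s, mink (c.B₁ s) U = 0 := by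
      intro s
      have h1 : HasDerivAt (fun t => mink (c.B₂ t) U) (mink ((c.ε₁ * c.k₃ s) • c.B₁ s) U) s :=
        hasDerivAt_mink U (hB₂ s)
      have h2 : (fun t => mink (c.B₂ t) U) = fun _ => C0 := funext hC
      rw [h2] at h1
      have h3 := h1.unique (hasDerivAt_const s C0)
      rw [mink_smul] at h3
      have hk : c.ε₁ * c.k₃ s ≠ 0 := mul_ne_zero (by rw [hε]; norm_num) (c.k₃_ne s)
      exact (mul_eq_zero.1 h3).resolve_left hk
    have hstar : ∀ s, c.ε₂ * c.k₂ s * mink (c.N s) U + c.k₃ s * C0 = 0 := by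
      intro s
      have h1 := hasDerivAt_mink U (hB₁ s)
      have h2 : (fun t => mink (c.B₁ t) U) = fun _ => (0:ℝ) := funext hc1
      rw [h2] at h1
      have h3 := h1.unique (hasDerivAt_const s 0)
      rw [mink_add, mink_smul, mink_smul, hC s] at h3
      exact h3
    have hA' : ∀ s, HasDerivAt (fun t => mink (c.T t) U) (c.k₁ s * mink (c.N s) U) s := by
      intro s
      have h1 := hasDerivAt_mink U (hT s)
      rwa [mink_smul] at h1
    have hBf : ∀ s, HasDerivAt (fun t => mink (c.N t) U) (c.k₁ s * mink (c.T s) U) s := by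
      intro s
      have h1 := hasDerivAt_mink U (hN s)
      rw [mink_add, mink_smul, mink_smul, hc1 s, hε] at h1
      have e : -(-1 * c.k₁ s) * mink (c.T s) U + c.k₂ s * 0
          = c.k₁ s * mink (c.T s) U := by ring
      rwa [e] at h1
    have hg : ∀ s, (mink (c.T s) U - mink (c.N s) U) * Real.exp (θ s)
        = mink (c.T 0) U - mink (c.N 0) U := by
      have key : ∀ u, HasDerivAt
          (fun t => (mink (c.T t) U - mink (c.N t) U) * Real.exp (θ t)) 0 u := by
        intro u
        have h1 := ((hA' u).sub (hBf u)).mul ((hθ u).exp)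
        have e : (c.k₁ u * mink (c.N u) U - c.k₁ u * mink (c.T u) U) * Real.exp (θ u)
            + (mink (c.T u) U - mink (c.N u) U) * (Real.exp (θ u) * c.k₁ u) = 0 := by ring
        rwa [Pi.sub_apply, e] at h1
      intro s
      have hconst := is_const_of_deriv_eq_zero (fun t => (key t).differentiableAt)
        (fun t => (key t).deriv) s 0
      simpa [hθ0] using hconst
    have hh : ∀ s, (mink (c.T s) U + mink (c.N s) U) * Real.exp (-θ s)
        = mink (c.T 0) U + mink (c.N 0) U := by
      have key : ∀ u, HasDerivAt
          (fun t => (mink (c.T t) U + mink (c.N t) U) * Real.exp (-θ t)) 0 u := by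
        intro u
        have h1 := ((hA' u).add (hBf u)).mul (((hθ u).neg).exp)
        have e : (c.k₁ u * mink (c.N u) U + c.k₁ u * mink (c.T u) U) * Real.exp (-θ u)
            + (mink (c.T u) U + mink (c.N u) U) * (Real.exp (-θ u) * -c.k₁ u) = 0 := by ring
        rwa [Pi.add_apply, Pi.neg_apply, e] at h1
      intro s
      have hconst := is_const_of_deriv_eq_zero (fun t => (key t).differentiableAt)
        (fun t => (key t).deriv) s 0
      simpa [hθ0] using hconst
    have hbform : ∀ s, mink (c.N s) U =
        mink (c.N 0) U * Real.cosh (θ s) + mink (c.T 0) U * Real.sinh (θ s) := by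
      intro s
      have e1 := hg s
      have e2 := hh s
      have hmul : Real.exp (θ s) * Real.exp (-θ s) = 1 := by
        rw [← Real.exp_add]; simp
      rw [Real.cosh_eq, Real.sinh_eq]
      linear_combination (1/2) * Real.exp (θ s) * e2 - (1/2) * Real.exp (-θ s) * e1
        - mink (c.N s) U * hmul
    by_cases hC0 : C0 = 0
    · exfalso
      have hb0 : ∀ s, mink (c.N s) U = 0 := by
        intro s
        have h := hstar s
        rw [hC0, mul_zero, add_zero] at h
        exact (mul_eq_zero.1 h).resolve_left (mul_ne_zero hε₂ne (c.k₂_ne s))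
      have ha0 : ∀ s, mink (c.T s) U = 0 := by
        intro s
        have h1 := hBf s
        have h2 : (fun t => mink (c.N t) U) = fun _ => (0:ℝ) := funext hb0
        rw [h2] at h1
        have h3 := (h1.unique (hasDerivAt_const s 0)).symm
        exact (mul_eq_zero.1 h3.symm).resolve_left (c.k₁_ne s)
      exact hU (mink_nondeg (c.T 0) (c.N 0) (c.B₁ 0) (c.B₂ 0) U c.ε₁ c.ε₂
        c.ε₁_sign c.ε₂_sign (c.TT 0) (c.NN 0) (c.B₁B₁ 0) (c.B₂B₂ 0) (c.TN 0) (c.TB₁ 0)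
        (c.TB₂ 0) (c.NB₁ 0) (c.NB₂ 0) (c.B₁B₂ 0) (ha0 0) (hb0 0) (hc1 0)
        ((hC 0).trans hC0))
    · refine ⟨-c.ε₂ * mink (c.N 0) U / C0, -c.ε₂ * mink (c.T 0) U / C0, fun s => ?_⟩
      show c.k₃ s / c.k₂ s = -c.ε₂ * mink (c.N 0) U / C0 * Real.cosh (θ s)
        + -c.ε₂ * mink (c.T 0) U / C0 * Real.sinh (θ s)
      have key : c.k₃ s / c.k₂ s = -c.ε₂ * mink (c.N s) U / C0 := by
        rw [div_eq_div_iff (c.k₂_ne s) hC0]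
        linear_combination hstar s
      rw [key, hbform s]
      ring
  · rintro ⟨C, D, hCD⟩
    set a : ℝ → ℝ := fun u => C * Real.sinh (θ u) + D * Real.cosh (θ u) with hadef
    set b : ℝ → ℝ := fun u => C * Real.cosh (θ u) + D * Real.sinh (θ u) with hbdef
    have hbk : ∀ s, b s * c.k₂ s = c.k₃ s := by
      intro s
      have h := hCD s
      rw [div_eq_iff (c.k₂_ne s)] at h
      exact h.symm
    have ha' : ∀ s, HasDerivAt a (c.k₁ s * b s) s := by
      intro s
      have h1 := (((hθ s).sinh).const_mul C).add (((hθ s).cosh).const_mul D)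
      have e : C * (Real.cosh (θ s) * c.k₁ s) + D * (Real.sinh (θ s) * c.k₁ s)
          = c.k₁ s * b s := by rw [hbdef]; ring
      rwa [e] at h1
    have hb' : ∀ s, HasDerivAt b (c.k₁ s * a s) s := by
      intro s
      have h1 := (((hθ s).cosh).const_mul C).add (((hθ s).sinh).const_mul D)
      have e : C * (Real.sinh (θ s) * c.k₁ s) + D * (Real.cosh (θ s) * c.k₁ s)
          = c.k₁ s * a s := by rw [hadef]; ring
      rwa [e] at h1
    have hUconst : ∀ i : Fin 4, ∀ s : ℝ,
        a s * c.T s i - b s * c.N s i - c.B₂ s i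
          = a 0 * c.T 0 i - b 0 * c.N 0 i - c.B₂ 0 i := by
      intro i s
      have key : ∀ u, HasDerivAt
          (fun t => a t * c.T t i - b t * c.N t i - c.B₂ t i) 0 u := by
        intro u
        have hTi : HasDerivAt (fun t => c.T t i) (c.k₁ u * c.N u i) u := by
          have h := hasDerivAt_pi.1 (hT u) i
          simpa using h
        have hNi : HasDerivAt (fun t => c.N t i)
            ((-(c.ε₁ * c.k₁ u)) * c.T u i + c.k₂ u * c.B₁ u i) u := by
          have h := hasDerivAt_pi.1 (hN u) i
          simpa using h
        have hB₂i : HasDerivAt (fun t => c.B₂ t i) ((c.ε₁ * c.k₃ u) * c.B₁ u i) u := by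
          have h := hasDerivAt_pi.1 (hB₂ u) i
          simpa using h
        have h1 := (((ha' u).mul hTi).sub ((hb' u).mul hNi)).sub hB₂i
        have e : c.k₁ u * b u * c.T u i + a u * (c.k₁ u * c.N u i)
            - (c.k₁ u * a u * c.N u i
              + b u * (-(c.ε₁ * c.k₁ u) * c.T u i + c.k₂ u * c.B₁ u i))
            - c.ε₁ * c.k₃ u * c.B₁ u i = 0 := by
          rw [hε]
          first
            | linear_combination (c.B₁ u i) * hbk u
            | linear_combination (-(c.B₁ u i)) * hbk u
        rwa [e] at h1
      exact is_const_of_deriv_eq_zero (fun t => (key t).differentiableAt)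
        (fun t => (key t).deriv) s 0
    have hval : ∀ s, mink (c.B₂ s)
        (fun i => a 0 * c.T 0 i - b 0 * c.N 0 i - c.B₂ 0 i) = -c.ε₂ := by
      intro s
      have h0 := hUconst 0 s
      have h1 := hUconst 1 s
      have h2 := hUconst 2 s
      have h3 := hUconst 3 s
      have tb := c.TB₂ s
      have nb := c.NB₂ s
      have bb := c.B₂B₂ s
      simp only [mink] at tb nb bb ⊢
      rw [← h0, ← h1, ← h2, ← h3]
      linear_combination a s * tb - b s * nb - bb
    refine ⟨fun i => a 0 * c.T 0 i - b 0 * c.N 0 i - c.B₂ 0 i, ?_, -c.ε₂, hval⟩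
    intro h0
    have := hval 0
    rw [h0] at this
    simp only [mink, Pi.zero_apply, mul_zero, neg_zero, add_zero, zero_add] at this
    exact hε₂ne (by linarith)
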